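/- Let S be a closed connected LNE subset of the unit sphere S^{n-1} in R^n, and let Ŝ⁺ be the non-negative cone over S with vertex 0. Then for any R > 0, the truncated cone Ŝ⁺ ∩ {x : |x| ≤ R} is Lipschitz normally embedded. -/

import Mathlib

/-!
Write `x = t • u`, `y = s • v` with `u, v ∈ S` and `t ≤ s`, and go from `x` to `y` through
`t • v`. Scaling a path of `S` from `u` to `v` by `t` gives a path in the cone of length at most
`t * L * ‖u - v‖ ≤ L * ‖x - y‖`, and the radial segment from `t • v` to `s • v` has length
`s - t ≤ ‖x - y‖`; so the truncated cone is LNE with constant `1 + L`.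
-/

open scoped ENNReal

noncomputable def pathLength {E : Type*} [PseudoEMetricSpace E] (γ : ℝ → E) : ℝ≥0∞ :=
  eVariationOn γ (Set.Icc 0 1)

noncomputable def innerDist {E : Type*} [PseudoEMetricSpace E] (S : Set E) (x y : E) : ℝ≥0∞ :=
  ⨅ (γ : ℝ → E) (_ : ContinuousOn γ (Set.Icc 0 1)) (_ : γ 0 = x) (_ : γ 1 = y)
    (_ : γ '' Set.Icc 0 1 ⊆ S), pathLength γ

def IsLNEWith {E : Type*} [NormedAddCommGroup E] (L : ℝ) (S : Set E) : Prop :=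
  ∀ x ∈ S, ∀ y ∈ S, innerDist S x y ≤ ENNReal.ofReal (L * dist x y)

def IsLNE {E : Type*} [NormedAddCommGroup E] (S : Set E) : Prop :=
  ∃ L > 0, IsLNEWith L S

def nonnegCone {n : ℕ} (S : Set (EuclideanSpace ℝ (Fin n))) : Set (EuclideanSpace ℝ (Fin n)) :=
  {x | ∃ t : ℝ, 0 ≤ t ∧ ∃ u ∈ S, x = t • u}

open Set

section PathLength

variable {E : Type*} [PseudoEMetricSpace E] {S : Set E} {x y z : E} {γ : ℝ → E}

theorem innerDist_le_pathLength (hc : ContinuousOn γ (Icc 0 1)) (h0 : γ 0 = x) (h1 : γ 1 = y)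
    (hS : γ '' Icc 0 1 ⊆ S) : innerDist S x y ≤ pathLength γ :=
  iInf_le_of_le γ <| iInf_le_of_le hc <| iInf_le_of_le h0 <| iInf_le_of_le h1 <|
    iInf_le_of_le hS le_rfl

theorem exists_path_of_innerDist_ne_top (h : innerDist S x y ≠ ⊤) :
    ∃ γ : ℝ → E, ContinuousOn γ (Icc 0 1) ∧ γ 0 = x ∧ γ 1 = y ∧ γ '' Icc 0 1 ⊆ S := by
  simp only [innerDist, ne_eq, iInf_eq_top, not_forall] at h
  obtain ⟨γ, hc, h0, h1, hS, -⟩ := h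
  exact ⟨γ, hc, h0, h1, hS⟩

theorem innerDist_comm (S : Set E) (x y : E) : innerDist S x y = innerDist S y x := by
  suffices key : ∀ a b : E, innerDist S a b ≤ innerDist S b a from
    le_antisymm (key x y) (key y x)
  intro a b
  refine le_iInf fun γ => le_iInf fun hc => le_iInf fun h0 => le_iInf fun h1 =>
    le_iInf fun hS => ?_
  have hflip : (fun θ : ℝ => 1 - θ) '' Icc 0 1 = Icc 0 1 := by
    rw [image_const_sub_Icc]; norm_num
  have hanti : AntitoneOn (fun θ : ℝ => 1 - θ) (Icc 0 1) := fun p _ q _ hpq => by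
    simp only; linarith
  calc innerDist S a b ≤ pathLength (γ ∘ fun θ => 1 - θ) := by
        refine innerDist_le_pathLength (hc.comp (by fun_prop) ?_) (by simp [h1]) (by simp [h0]) ?_
        · exact (mapsTo_image _ _).mono_right hflip.subset
        · rwa [image_comp, hflip]
    _ = pathLength γ := by
        rw [pathLength, pathLength, eVariationOn.comp_eq_of_antitoneOn γ _ hanti, hflip]

end PathLength

section Concat

variable {E : Type*} {γ₁ γ₂ : ℝ → E}

noncomputable def concatPath (γ₁ γ₂ : ℝ → E) : ℝ → E :=
  fun θ => if θ ≤ 1 / 2 then γ₁ (2 * θ) else γ₂ (2 * θ - 1)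

private theorem image_two_mul_Icc : (fun θ : ℝ => 2 * θ) '' Icc 0 (1 / 2) = Icc 0 1 := by
  rw [image_mul_left_Icc (by norm_num) (by norm_num)]; norm_num

private theorem image_two_mul_sub_one_Icc :
    (fun θ : ℝ => 2 * θ - 1) '' Icc (1 / 2) 1 = Icc 0 1 := by
  simp only [sub_eq_add_neg]
  rw [image_affine_Icc' (by norm_num)]; norm_num

theorem concatPath_eqOn_left : EqOn (concatPath γ₁ γ₂) (γ₁ ∘ (2 * ·)) (Icc 0 (1 / 2)) :=
  fun _ hθ => if_pos hθ.2

theorem concatPath_eqOn_right (h : γ₁ 1 = γ₂ 0) :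
    EqOn (concatPath γ₁ γ₂) (γ₂ ∘ (2 * · - 1)) (Icc (1 / 2) 1) := by
  intro θ hθ
  rcases hθ.1.eq_or_lt with rfl | hlt
  · norm_num [concatPath, h]
  · exact if_neg (not_le.2 hlt)

theorem image_concatPath_subset (h : γ₁ 1 = γ₂ 0) :
    concatPath γ₁ γ₂ '' Icc 0 1 ⊆ γ₁ '' Icc 0 1 ∪ γ₂ '' Icc 0 1 := by
  conv_lhs => rw [← Icc_union_Icc_eq_Icc (by norm_num : (0 : ℝ) ≤ 1 / 2) (by norm_num)]
  rw [image_union, concatPath_eqOn_left.image_eq, (concatPath_eqOn_right h).image_eq,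
    image_comp, image_comp, image_two_mul_Icc, image_two_mul_sub_one_Icc]

variable [PseudoEMetricSpace E]

theorem continuousOn_concatPath (hc₁ : ContinuousOn γ₁ (Icc 0 1))
    (hc₂ : ContinuousOn γ₂ (Icc 0 1)) (h : γ₁ 1 = γ₂ 0) :
    ContinuousOn (concatPath γ₁ γ₂) (Icc 0 1) := by
  rw [← Icc_union_Icc_eq_Icc (by norm_num : (0 : ℝ) ≤ 1 / 2) (by norm_num)]
  refine ContinuousOn.union_of_isClosed ?_ ?_ isClosed_Icc isClosed_Icc
  · refine (hc₁.comp (by fun_prop) ?_).congr concatPath_eqOn_left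
    exact (mapsTo_image _ _).mono_right image_two_mul_Icc.subset
  · refine (hc₂.comp (by fun_prop) ?_).congr (concatPath_eqOn_right h)
    exact (mapsTo_image _ _).mono_right image_two_mul_sub_one_Icc.subset

theorem pathLength_concatPath (h : γ₁ 1 = γ₂ 0) :
    pathLength (concatPath γ₁ γ₂) = pathLength γ₁ + pathLength γ₂ := by
  have hmono₁ : MonotoneOn (fun θ : ℝ => 2 * θ) (Icc 0 (1 / 2)) :=
    fun p _ q _ hpq => by simp only; linarith
  have hmono₂ : MonotoneOn (fun θ : ℝ => 2 * θ - 1) (Icc (1 / 2) 1) :=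
    fun p _ q _ hpq => by simp only; linarith
  have hsplit := eVariationOn.Icc_add_Icc (concatPath γ₁ γ₂) (by norm_num : (0 : ℝ) ≤ 1 / 2)
    (by norm_num : (1 / 2 : ℝ) ≤ 1) (mem_univ _)
  simp only [univ_inter] at hsplit
  rw [pathLength, ← hsplit, eVariationOn.eq_of_eqOn concatPath_eqOn_left,
    eVariationOn.eq_of_eqOn (concatPath_eqOn_right h),
    eVariationOn.comp_eq_of_monotoneOn _ _ hmono₁,
    eVariationOn.comp_eq_of_monotoneOn _ _ hmono₂, image_two_mul_Icc, image_two_mul_sub_one_Icc,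
    pathLength, pathLength]

theorem innerDist_triangle (S : Set E) (x y z : E) :
    innerDist S x z ≤ innerDist S x y + innerDist S y z := by
  simp only [innerDist, ENNReal.iInf_add, ENNReal.add_iInf]
  -- `simp` leaves the infimum over the second leg `γ₂ : y ⟶ z` outermost
  refine le_iInf fun γ₂ => le_iInf fun hc₂ => le_iInf fun h₂0 => le_iInf fun h₂1 =>
    le_iInf fun hS₂ => le_iInf fun γ₁ => le_iInf fun hc₁ => le_iInf fun h₁0 => le_iInf fun h₁1 =>
    le_iInf fun hS₁ => ?_
  have hjoin : γ₁ 1 = γ₂ 0 := h₁1.trans h₂0.symm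
  rw [← pathLength_concatPath hjoin]
  refine innerDist_le_pathLength (continuousOn_concatPath hc₁ hc₂ hjoin) ?_ ?_
    ((image_concatPath_subset hjoin).trans (union_subset hS₁ hS₂))
  · simp [concatPath, h₁0]
  · norm_num [concatPath, h₂1]

end Concat

section Lipschitz

variable {E F : Type*} [PseudoEMetricSpace E] [PseudoEMetricSpace F] {S : Set E} {T : Set F}

theorem LipschitzOnWith.innerDist_le {f : E → F} {K : NNReal} (hf : LipschitzOnWith K f S)
    (hST : MapsTo f S T) {x y : E} (hxy : innerDist S x y ≠ ⊤) :
    innerDist T (f x) (f y) ≤ K * innerDist S x y := by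
  have hpath : ∀ γ : ℝ → E, ContinuousOn γ (Icc 0 1) → γ 0 = x → γ 1 = y → γ '' Icc 0 1 ⊆ S →
      innerDist T (f x) (f y) ≤ K * pathLength γ := fun γ hc h0 h1 hS =>
    (innerDist_le_pathLength (hf.continuousOn.comp hc (mapsTo_iff_image_subset.2 hS))
      (by simp [h0]) (by simp [h1])
      (by rw [image_comp]; exact (image_mono hS).trans hST.image_subset)).trans
      (hf.comp_eVariationOn_le (mapsTo_iff_image_subset.2 hS))
  -- `0 * ⊤ = 0` in `ℝ≥0∞`, so for `K = 0` the bound needs an actual path from `x` to `y`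
  rcases eq_or_ne K 0 with rfl | hK
  · obtain ⟨γ, hc, h0, h1, hS⟩ := exists_path_of_innerDist_ne_top hxy
    simpa using hpath γ hc h0 h1 hS
  · simp only [innerDist, ENNReal.mul_iInf_of_ne (ENNReal.coe_ne_zero.2 hK) ENNReal.coe_ne_top]
    exact le_iInf fun γ => le_iInf fun hc => le_iInf fun h0 => le_iInf fun h1 =>
      le_iInf fun hS => hpath γ hc h0 h1 hS

end Lipschitz

theorem innerDist_le_edist_of_segment_subset {E : Type*} [NormedAddCommGroup E] [NormedSpace ℝ E]
    {S : Set E} {x y : E} (h : segment ℝ x y ⊆ S) : innerDist S x y ≤ edist x y := by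
  rw [segment_eq_image_lineMap] at h
  calc innerDist S x y ≤ pathLength (AffineMap.lineMap x y : ℝ → E) :=
        innerDist_le_pathLength AffineMap.lineMap_continuous.continuousOn (by simp) (by simp) h
    _ ≤ nndist x y * eVariationOn id (Icc (0 : ℝ) 1) :=
        ((lipschitzWith_lineMap x y).lipschitzOnWith (s := univ)).comp_eVariationOn_le
          (g := id) (mapsTo_univ _ _)
    _ = edist x y := by
        have := monotoneOn_id.eVariationOn_eq (mem_univ (0 : ℝ)) (mem_univ 1)
        rw [univ_inter] at this
        simp [this]

section SmulDist

variable {E : Type*} [NormedAddCommGroup E] {u v : E} {t s : ℝ}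

theorem norm_smul_of_mem_sphere [NormedSpace ℝ E] (hu : u ∈ Metric.sphere 0 1) (ht : 0 ≤ t) :
    ‖t • u‖ = t := by
  rw [norm_smul, mem_sphere_zero_iff_norm.1 hu, mul_one, Real.norm_of_nonneg ht]

theorem dist_smul_smul_le_of_norm_eq [NormedSpace ℝ E] (huv : ‖u‖ = ‖v‖) (ht : 0 ≤ t)
    (hs : 0 ≤ s) : dist (t • v) (s • v) ≤ dist (t • u) (s • v) := by
  have hnorm : ‖t • u‖ - ‖s • v‖ = (t - s) * ‖v‖ := by
    rw [norm_smul, norm_smul, Real.norm_of_nonneg ht, Real.norm_of_nonneg hs, huv]; ring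
  rw [dist_eq_norm, dist_eq_norm, ← sub_smul, norm_smul, Real.norm_eq_abs, ← abs_of_nonneg
    (norm_nonneg v), ← abs_mul, ← hnorm]
  exact abs_norm_sub_norm_le _ _

theorem mul_dist_le_dist_smul_smul [InnerProductSpace ℝ E] (huv : ‖u‖ = ‖v‖) (ht : 0 ≤ t)
    (hts : t ≤ s) : t * dist u v ≤ dist (t • u) (s • v) := by
  have hinner : inner ℝ u v ≤ ‖v‖ ^ 2 := by
    simpa [huv, sq] using real_inner_le_norm u v
  have hfar : dist (t • u) (s • v) ^ 2 =
      t ^ 2 * ‖v‖ ^ 2 - 2 * (t * s * inner ℝ u v) + s ^ 2 * ‖v‖ ^ 2 := by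
    rw [dist_eq_norm, norm_sub_sq_real, norm_smul, norm_smul, huv, real_inner_smul_left,
      real_inner_smul_right, Real.norm_of_nonneg ht, Real.norm_of_nonneg (ht.trans hts)]
    ring
  have hnear : dist u v ^ 2 = 2 * ‖v‖ ^ 2 - 2 * inner ℝ u v := by
    rw [dist_eq_norm, norm_sub_sq_real, huv]; ring
  have hcross : t * (s - t) * inner ℝ u v ≤ t * (s - t) * ‖v‖ ^ 2 :=
    mul_le_mul_of_nonneg_left hinner (mul_nonneg ht (sub_nonneg.2 hts))
  refine (pow_le_pow_iff_left₀ (by positivity) dist_nonneg two_ne_zero).1 ?_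
  rw [mul_pow, hfar, hnear]
  nlinarith [sq_nonneg ((s - t) * ‖v‖)]

end SmulDist

section TruncatedCone

variable {n : ℕ} {S : Set (EuclideanSpace ℝ (Fin n))} {u v : EuclideanSpace ℝ (Fin n)}
  {t s R L : ℝ}

theorem smul_mem_truncatedCone (hS : S ⊆ Metric.sphere 0 1) (hu : u ∈ S) (ht : 0 ≤ t)
    (htR : t ≤ R) : t • u ∈ nonnegCone S ∩ {x | ‖x‖ ≤ R} :=
  ⟨⟨t, ht, u, hu, rfl⟩, (norm_smul_of_mem_sphere (hS hu) ht).trans_le htR⟩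

theorem segment_smul_subset_truncatedCone (hS : S ⊆ Metric.sphere 0 1) (hv : v ∈ S)
    (ht : 0 ≤ t) (hts : t ≤ s) (hsR : s ≤ R) :
    segment ℝ (t • v) (s • v) ⊆ nonnegCone S ∩ {x | ‖x‖ ≤ R} := by
  rintro _ ⟨a, b, ha, hb, hab, rfl⟩
  rw [smul_smul, smul_smul, ← add_smul]
  refine smul_mem_truncatedCone hS hv
    (add_nonneg (mul_nonneg ha ht) (mul_nonneg hb (ht.trans hts))) ?_
  nlinarith

theorem innerDist_truncatedCone_le (hS : S ⊆ Metric.sphere 0 1) (hL : 0 ≤ L)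
    (hLS : IsLNEWith L S) (hu : u ∈ S) (hv : v ∈ S) (ht : 0 ≤ t) (hts : t ≤ s) (hsR : s ≤ R) :
    innerDist (nonnegCone S ∩ {x | ‖x‖ ≤ R}) (t • u) (s • v) ≤
      ENNReal.ofReal ((1 + L) * dist (t • u) (s • v)) := by
  set C := nonnegCone S ∩ {x | ‖x‖ ≤ R}
  have huv : ‖u‖ = ‖v‖ := by
    rw [mem_sphere_zero_iff_norm.1 (hS hu), mem_sphere_zero_iff_norm.1 (hS hv)]
  have hangular : innerDist C (t • u) (t • v) ≤ ENNReal.ofReal (L * dist (t • u) (s • v)) :=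
    calc innerDist C (t • u) (t • v) ≤ ‖t‖₊ * innerDist S u v :=
          (lipschitzWith_smul t).lipschitzOnWith.innerDist_le
            (fun w hw => smul_mem_truncatedCone hS hw ht (hts.trans hsR))
            (ne_top_of_le_ne_top ENNReal.ofReal_ne_top (hLS u hu v hv))
      _ ≤ ENNReal.ofReal t * ENNReal.ofReal (L * dist u v) := by
          rw [← Real.enorm_eq_ofReal ht]
          exact mul_le_mul_right (hLS u hu v hv) _
      _ = ENNReal.ofReal (L * (t * dist u v)) := by
          rw [← ENNReal.ofReal_mul ht]; ring_nf
      _ ≤ ENNReal.ofReal (L * dist (t • u) (s • v)) := by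
          gcongr; exact mul_dist_le_dist_smul_smul huv ht hts
  have hradial : innerDist C (t • v) (s • v) ≤ ENNReal.ofReal (dist (t • u) (s • v)) :=
    calc innerDist C (t • v) (s • v) ≤ edist (t • v) (s • v) :=
          innerDist_le_edist_of_segment_subset
            (segment_smul_subset_truncatedCone hS hv ht hts hsR)
      _ ≤ ENNReal.ofReal (dist (t • u) (s • v)) := by
          rw [edist_dist]
          exact ENNReal.ofReal_le_ofReal (dist_smul_smul_le_of_norm_eq huv ht (ht.trans hts))
  calc innerDist C (t • u) (s • v) ≤ innerDist C (t • u) (t • v) + innerDist C (t • v) (s • v) :=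
        innerDist_triangle _ _ _ _
    _ ≤ ENNReal.ofReal (L * dist (t • u) (s • v)) + ENNReal.ofReal (dist (t • u) (s • v)) :=
        add_le_add hangular hradial
    _ = ENNReal.ofReal ((1 + L) * dist (t • u) (s • v)) := by
        rw [← ENNReal.ofReal_add (by positivity) dist_nonneg]; ring_nf

end TruncatedCone

theorem truncated_cone_LNE_general {n : ℕ} (S : Set (EuclideanSpace ℝ (Fin n)))
    (hS : S ⊆ Metric.sphere (0 : EuclideanSpace ℝ (Fin n)) 1)
    (hLNE : IsLNE S)
    (R : ℝ) :
    IsLNE (nonnegCone S ∩ {x | ‖x‖ ≤ R}) := by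
  obtain ⟨L, hL, hLS⟩ := hLNE
  refine ⟨1 + L, by linarith, ?_⟩
  rintro _ ⟨⟨t, ht, u, hu, rfl⟩, htR⟩ _ ⟨⟨s, hs, v, hv, rfl⟩, hsR⟩
  rw [mem_ofPred_eq, norm_smul_of_mem_sphere (hS hu) ht] at htR
  rw [mem_ofPred_eq, norm_smul_of_mem_sphere (hS hv) hs] at hsR
  rcases le_total t s with hts | hst
  · exact innerDist_truncatedCone_le hS hL.le hLS hu hv ht hts hsR
  · rw [innerDist_comm, dist_comm]
    exact innerDist_truncatedCone_le hS hL.le hLS hv hu hs hst htR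

theorem truncated_cone_LNE {n : ℕ} (S : Set (EuclideanSpace ℝ (Fin n)))
    (hS : S ⊆ Metric.sphere (0 : EuclideanSpace ℝ (Fin n)) 1)
    (hclosed : IsClosed S) (hconn : IsConnected S) (hLNE : IsLNE S)
    (R : ℝ) (hR : 0 < R) :
    IsLNE (nonnegCone S ∩ {x | ‖x‖ ≤ R}) :=
  truncated_cone_LNE_general S hS hLNE R
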